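/- In dimension n = 3, with Λ_{i,j}³ := f_i'f_j'' − f_i''f_j' and D⁶ := det of the 3×3 matrix with rows (f₁',f₂',f₃'), (f₁'',f₂'',f₃''), (f₁''',f₂''',f₃'''), the bracket identity [Λ_{1,2}³, Λ_{1,3}³] = −3·f₁'·D⁶ holds, where [P,Q] = 3·DP·Q − 3·P·DQ (both have weight 3) and D is the total differentiation operator. -/

import Mathlib

open MvPolynomial

/-- The total differentiation operator `D = Σ_i Σ_λ f_i^{(λ+1)} ∂/∂f_i^{(λ)}` on jet
polynomials in dimension 3, where the variable `(i, λ)` of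
`MvPolynomial (Fin 3 × ℕ) ℂ` stands for `f_{i+1}^{(λ)}`. -/
noncomputable def Dop (P : MvPolynomial (Fin 3 × ℕ) ℂ) : MvPolynomial (Fin 3 × ℕ) ℂ :=
  ∑ v ∈ P.vars, X (v.1, v.2 + 1) * pderiv v P

/-- The bracket of two weight-3 invariants: `[P,Q] = 3·DP·Q − 3·P·DQ`. -/
noncomputable def jetBracket3 (P Q : MvPolynomial (Fin 3 × ℕ) ℂ) :
    MvPolynomial (Fin 3 × ℕ) ℂ :=
  (3 : MvPolynomial (Fin 3 × ℕ) ℂ) * Dop P * Q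
    - (3 : MvPolynomial (Fin 3 × ℕ) ℂ) * P * Dop Q

/-- The Wronskian `Λ_{i,j}³ := f_i'f_j'' − f_i''f_j'`. -/
noncomputable def Lambda3 (i j : Fin 3) : MvPolynomial (Fin 3 × ℕ) ℂ :=
  X (i, 1) * X (j, 2) - X (i, 2) * X (j, 1)

/-- The three-dimensional Wronskian `D⁶`, the determinant of the `3×3` matrix with rows
`(f₁',f₂',f₃')`, `(f₁'',f₂'',f₃'')`, `(f₁''',f₂''',f₃''')`. -/
noncomputable def D6 : MvPolynomial (Fin 3 × ℕ) ℂ :=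
  Matrix.det (Matrix.of fun r c : Fin 3 => X (c, (r : ℕ) + 1))

/-
`D` is a derivation with `D f_i^{(λ)} = f_i^{(λ+1)}`, so `D Λ_{i,j}³ = f_i'f_j''' − f_i'''f_j'`
(the `f_i''f_j''` terms cancel). After substituting this and expanding `D⁶`, both sides
are the same polynomial in the nine jet variables `f_i', f_i'', f_i'''`.
-/

lemma Dop_eq_sum_of_vars_subset {P : MvPolynomial (Fin 3 × ℕ) ℂ} {S : Finset (Fin 3 × ℕ)}
    (h : P.vars ⊆ S) : Dop P = ∑ v ∈ S, X (v.1, v.2 + 1) * pderiv v P :=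
  Finset.sum_subset h fun v _ hv => by rw [pderiv_eq_zero_of_notMem_vars hv, mul_zero]

lemma Dop_X (v : Fin 3 × ℕ) : Dop (X v) = X (v.1, v.2 + 1) := by
  simp [Dop, vars_X]

lemma Dop_sub (P Q : MvPolynomial (Fin 3 × ℕ) ℂ) : Dop (P - Q) = Dop P - Dop Q := by
  rw [Dop_eq_sum_of_vars_subset (vars_sub_subset P (q := Q)),
    Dop_eq_sum_of_vars_subset (S := P.vars ∪ Q.vars) Finset.subset_union_left,
    Dop_eq_sum_of_vars_subset (S := P.vars ∪ Q.vars) Finset.subset_union_right,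
    ← Finset.sum_sub_distrib]
  simp only [map_sub, mul_sub]

lemma Dop_mul (P Q : MvPolynomial (Fin 3 × ℕ) ℂ) : Dop (P * Q) = Dop P * Q + P * Dop Q := by
  rw [Dop_eq_sum_of_vars_subset (vars_mul P Q),
    Dop_eq_sum_of_vars_subset (S := P.vars ∪ Q.vars) Finset.subset_union_left,
    Dop_eq_sum_of_vars_subset (S := P.vars ∪ Q.vars) Finset.subset_union_right,
    Finset.sum_mul, Finset.mul_sum, ← Finset.sum_add_distrib]
  refine Finset.sum_congr rfl fun v _ => ?_
  rw [pderiv_mul]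
  ring

lemma Dop_Lambda3 (i j : Fin 3) :
    Dop (Lambda3 i j) = X (i, 1) * X (j, 3) - X (i, 3) * X (j, 1) := by
  simp only [Lambda3, Dop_sub, Dop_mul, Dop_X]
  ring

/-- In dimension `n = 3`, the bracket identity `[Λ_{1,2}³, Λ_{1,3}³] = −3·f₁'·D⁶`. -/
theorem bracket_lambda12_lambda13 :
    jetBracket3 (Lambda3 0 1) (Lambda3 0 2) =
      -(3 : MvPolynomial (Fin 3 × ℕ) ℂ) * X (0, 1) * D6 := by
  rw [jetBracket3, Dop_Lambda3, Dop_Lambda3, D6, Matrix.det_fin_three, Lambda3, Lambda3]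
  simp only [Matrix.of_apply, Fin.val_zero, Fin.val_one, Fin.val_two]
  ring
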